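/- arXiv:2602.21446 — 2 statements merged into one kernel-verified Lean document; each statement's English description precedes it below -/
import Mathlib

section
/- Let (X_1,Y_1),…,(X_{n+1},Y_{n+1}) be exchangeable random pairs taking values in 𝒳 × {1,…,K}, let Ŝ : 𝒳 × {1,…,K} → ℝ be a fixed measurable nonconformity score function, and fix α ∈ (0,1). Assume the n+1 scores Ŝ(X_1,Y_1),…,Ŝ(X_{n+1},Y_{n+1}) are almost surely pairwise distinct. Let Q̂_{1−α} be the ⌈(1−α)(n+1)⌉-th smallest value among Ŝ(X_1,Y_1),…,Ŝ(X_n,Y_n) (with Q̂_{1−α} = +∞ if ⌈(1−α)(n+1)⌉ > n), and let Ĉ_α(X_{n+1}) = {y ∈ {1,…,K} : Ŝ(X_{n+1},y) ≤ Q̂_{1−α}}. Then ℙ(Y_{n+1} ∈ Ĉ_α(X_{n+1})) ≤ 1 − α + 1/(n+1). -/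
/-!
Under exchangeability the events "the `i`-th score has fewer than `k` scores strictly below it"
all have the same probability, and when the scores are distinct at most `k` of these `n + 1`
events occur at once; hence each has probability at most `k / (n + 1)`. Coverage of the test
point forces fewer than `k = ⌈(1 - α)(n + 1)⌉` calibration scores below the test score, and
`k / (n + 1) ≤ 1 - α + 1 / (n + 1)`.
-/

open MeasureTheory

/-- The `k`-th smallest value (1-indexed) of a tuple of reals. -/
noncomputable def kthSmallest {n : ℕ} (s : Fin n → ℝ) (k : ℕ) : ℝ :=
  ((List.ofFn s).mergeSort (fun a b => a ≤ b)).getD (k - 1) 0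

open Finset

theorem kthSmallest_succ {m : ℕ} (v : Fin m → ℝ) (j : Fin m) :
    kthSmallest v (j + 1) = v (Tuple.sort v j) := by
  have hsort : (List.ofFn v).mergeSort (fun a b => a ≤ b) = List.ofFn (v ∘ Tuple.sort v) :=
    List.Perm.eq_of_sortedLE List.sortedLE_mergeSort
      (List.sortedLE_ofFn_iff.2 (Tuple.monotone_sort v))
      ((List.mergeSort_perm _ _).trans ((Tuple.sort v).ofFn_comp_perm v).symm)
  simp [kthSmallest, hsort]

theorem card_lt_of_le_kthSmallest {m k : ℕ} (v : Fin m → ℝ) (hk : 1 ≤ k) (hkm : k ≤ m)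
    {t : ℝ} (ht : t ≤ kthSmallest v k) : #{i | v i < t} < k := by
  obtain ⟨j, rfl⟩ : ∃ j : Fin m, k = j + 1 := ⟨⟨k - 1, by omega⟩, by rw [Fin.val_mk]; omega⟩
  rw [kthSmallest_succ] at ht
  have hperm : #{i | v i < t} = #{i | (v ∘ Tuple.sort v) i < t} := by
    simp only [card_filter, Function.comp_apply]
    exact (Equiv.sum_comp (Tuple.sort v) fun i => if v i < t then 1 else 0).symm
  have hsorted : ¬ (j : ℕ) < #{i | (v ∘ Tuple.sort v) i < t} :=
    mt (Tuple.lt_card_lt_iff_apply_lt_of_monotone (Tuple.monotone_sort v)).1 ht.not_gt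
  omega

section StrictRank

variable {ι α : Type*} [Fintype ι] [LinearOrder α]

def strictRank (w : ι → α) (i : ι) : ℕ :=
  #{j | w j < w i}

theorem strictRank_comp_perm (w : ι → α) (π : Equiv.Perm ι) (i : ι) :
    strictRank (w ∘ π) i = strictRank w (π i) := by
  simp only [strictRank, card_filter, Function.comp_apply]
  exact Equiv.sum_comp π fun j => if w j < w (π i) then 1 else 0

theorem strictRank_lt_strictRank {w : ι → α} {i j : ι} (h : w i < w j) :
    strictRank w i < strictRank w j := by
  refine card_lt_card ((ssubset_iff_of_subset fun x hx => ?_).2 ⟨i, ?_⟩)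
  · simp only [mem_filter, mem_univ, true_and] at hx ⊢
    exact hx.trans h
  · simp [h]

theorem strictRank_injective {w : ι → α} (hw : Function.Injective w) :
    Function.Injective (strictRank w) := by
  intro i j hij
  rcases lt_trichotomy (w i) (w j) with h | h | h
  · exact absurd hij (strictRank_lt_strictRank h).ne
  · exact hw h
  · exact absurd hij (strictRank_lt_strictRank h).ne'

theorem card_strictRank_lt_le {w : ι → α} (hw : Function.Injective w) (k : ℕ) :
    #{i | strictRank w i < k} ≤ k := by
  simpa using card_le_card_of_injOn (strictRank w) (t := range k)
    (fun i hi => by simpa using hi) (strictRank_injective hw).injOn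

theorem strictRank_last {n : ℕ} (w : Fin (n + 1) → α) :
    strictRank w (Fin.last n) = #{j : Fin n | w j.castSucc < w (Fin.last n)} := by
  rw [strictRank, card_filter, card_filter, Fin.sum_univ_castSucc]
  simp

theorem measurable_strictRank (i : ι) : Measurable fun w : ι → ℝ => strictRank w i := by
  simp only [strictRank, card_filter]
  exact Finset.measurable_sum _ fun j _ => Measurable.ite
    (measurableSet_lt (measurable_pi_apply j) (measurable_pi_apply i)) measurable_const
    measurable_const

end StrictRank

section Exchangeable

variable {Ω ι β : Type*} [MeasurableSpace Ω] [MeasurableSpace β] {P : Measure Ω} {Z : Ω → ι → β}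

theorem measure_preimage_comp_perm_eq (hZ : Measurable Z)
    (hexch : ∀ π : Equiv.Perm ι, P.map (fun ω i => Z ω (π i)) = P.map Z)
    (π : Equiv.Perm ι) {B : Set (ι → β)} (hB : MeasurableSet B) :
    P {ω | (fun i => Z ω (π i)) ∈ B} = P (Z ⁻¹' B) := by
  have hZπ : Measurable fun ω i => Z ω (π i) :=
    measurable_pi_lambda _ fun i => (measurable_pi_apply (π i)).comp hZ
  rw [← Measure.map_apply hZ hB, ← hexch π, Measure.map_apply hZπ hB]
  rfl

open Classical in
theorem card_mul_measure_le_of_exchangeable [Fintype ι] (hZ : Measurable Z)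
    (hexch : ∀ π : Equiv.Perm ι, P.map (fun ω i => Z ω (π i)) = P.map Z)
    {E : ι → Set (ι → β)} (hE : ∀ i, MeasurableSet (E i))
    (hEperm : ∀ (π : Equiv.Perm ι) i z, (fun j => z (π j)) ∈ E i ↔ z ∈ E (π i))
    {k : ℕ} (hk : ∀ᵐ ω ∂P, #{i | Z ω ∈ E i} ≤ k) (i₀ : ι) :
    Fintype.card ι * P (Z ⁻¹' E i₀) ≤ k * P Set.univ := by
  have hsame : ∀ i, P (Z ⁻¹' E i) = P (Z ⁻¹' E i₀) := fun i => by
    rw [← measure_preimage_comp_perm_eq hZ hexch (Equiv.swap i₀ i) (hE i₀)]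
    simp only [hEperm, Equiv.swap_apply_left]
    rfl
  calc Fintype.card ι * P (Z ⁻¹' E i₀) = ∑ i, P (Z ⁻¹' E i) := by simp [hsame]
    _ = ∫⁻ ω, ∑ i, (Z ⁻¹' E i).indicator 1 ω ∂P := by
      rw [lintegral_finsetSum _ fun i _ => (measurable_one.indicator (hZ (hE i)))]
      simp [lintegral_indicator_one (hZ (hE _))]
    _ ≤ ∫⁻ _, (k : ENNReal) ∂P := lintegral_mono_ae <| hk.mono fun ω hω => by
      simpa [Set.indicator_apply, sum_boole] using hω
    _ = k * P Set.univ := lintegral_const _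

end Exchangeable

/-- The threshold `Q̂` of split conformal prediction. -/
noncomputable def conformalQuantile {n : ℕ} (s : Fin n → ℝ) (k : ℕ) : EReal :=
  if k ≤ n then (kthSmallest s k : EReal) else ⊤

theorem strictRank_last_lt_of_le_conformalQuantile {n k : ℕ} (w : Fin (n + 1) → ℝ) (hk : 1 ≤ k)
    (h : (w (Fin.last n) : EReal) ≤ conformalQuantile (fun j : Fin n => w j.castSucc) k) :
    strictRank w (Fin.last n) < k := by
  rw [strictRank_last]
  unfold conformalQuantile at h
  split_ifs at h with hkn
  · exact card_lt_of_le_kthSmallest _ hk hkn (EReal.coe_le_coe_iff.1 h)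
  · exact (card_filter_le _ _).trans_lt (by simpa using hkn)

theorem natCeil_div_le {α : ℝ} (hα : α < 1) (n : ℕ) :
    (⌈(1 - α) * (n + 1)⌉₊ : ENNReal) / (n + 1) ≤ ENNReal.ofReal (1 - α + 1 / (n + 1)) := by
  have hceil := Nat.ceil_lt_add_one (show 0 ≤ (1 - α) * (n + 1) by nlinarith)
  have hn : ENNReal.ofReal ((n : ℝ) + 1) = n + 1 := by exact_mod_cast ENNReal.ofReal_natCast (n + 1)
  rw [← hn, ← ENNReal.ofReal_natCast, ← ENNReal.ofReal_div_of_pos (by positivity)]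
  refine ENNReal.ofReal_le_ofReal ?_
  rw [div_le_iff₀ (by positivity)]
  field_simp
  linarith

theorem split_conformal_marginal_coverage_upper_general
    {Ω : Type*} [MeasurableSpace Ω] (P : Measure Ω) [IsProbabilityMeasure P]
    {𝒳 : Type*} [MeasurableSpace 𝒳] (K : ℕ) (n : ℕ)
    (X : Fin (n + 1) → Ω → 𝒳) (Y : Fin (n + 1) → Ω → Fin K)
    (hmeas : ∀ i, Measurable (fun ω => (X i ω, Y i ω)))
    (hexch : ∀ π : Equiv.Perm (Fin (n + 1)),
      Measure.map (fun ω => fun i => (X (π i) ω, Y (π i) ω)) P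
        = Measure.map (fun ω => fun i => (X i ω, Y i ω)) P)
    (S : 𝒳 × Fin K → ℝ) (hS : Measurable S)
    (hdistinct : P {ω | ∀ i j : Fin (n + 1), i ≠ j →
      S (X i ω, Y i ω) ≠ S (X j ω, Y j ω)} = 1)
    (α : ℝ) (hα : α ∈ Set.Ioo (0 : ℝ) 1)
    (Qhat : Ω → EReal)
    (hQ : ∀ ω, Qhat ω =
      if ⌈(1 - α) * (n + 1)⌉ ≤ (n : ℤ) then
        ((kthSmallest (fun i : Fin n => S (X i.castSucc ω, Y i.castSucc ω))
            (⌈(1 - α) * (n + 1)⌉.toNat) : ℝ) : EReal)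
      else ⊤)
    (C : Ω → Set (Fin K))
    (hC : ∀ ω, C ω = {y : Fin K | (S (X (Fin.last n) ω, y) : EReal) ≤ Qhat ω}) :
    P {ω | Y (Fin.last n) ω ∈ C ω} ≤ ENNReal.ofReal (1 - α + 1 / (n + 1)) := by
  set k := ⌈(1 - α) * (n + 1)⌉₊
  have hk : 1 ≤ k := Nat.one_le_ceil_iff.2 (by nlinarith [hα.2])
  set Z : Ω → Fin (n + 1) → 𝒳 × Fin K := fun ω i => (X i ω, Y i ω)
  set E : Fin (n + 1) → Set (Fin (n + 1) → 𝒳 × Fin K) := fun i => {z | strictRank (S ∘ z) i < k}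
  have hcover : {ω | Y (Fin.last n) ω ∈ C ω} ⊆ Z ⁻¹' E (Fin.last n) := fun ω hω => by
    replace hω : (S (Z ω (Fin.last n)) : EReal) ≤ Qhat ω := by simpa [hC] using hω
    rw [hQ] at hω
    refine strictRank_last_lt_of_le_conformalQuantile _ hk ?_
    have hkn : ⌈(1 - α) * (n + 1)⌉ ≤ (n : ℤ) ↔ k ≤ n := by
      rw [Int.ceil_le, Nat.ceil_le]; norm_cast
    simpa [conformalQuantile, hkn, Int.ceil_toNat, Z] using hω
  have hinj : ∀ᵐ ω ∂P, Function.Injective (S ∘ Z ω) := by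
    have hD := (ae_iff_measure_eq (by measurability)).2 (hdistinct.trans measure_univ.symm)
    exact hD.mono fun ω hω i j hij => not_imp_not.1 (hω i j) hij
  have hcount := card_mul_measure_le_of_exchangeable (measurable_pi_lambda _ hmeas) hexch
    (E := E) (fun i => (measurable_strictRank i).comp
      (measurable_pi_lambda _ fun j => hS.comp (measurable_pi_apply j)) measurableSet_Iio)
    (fun π i z => show strictRank ((S ∘ z) ∘ π) i < k ↔ strictRank (S ∘ z) (π i) < k by
      rw [strictRank_comp_perm])
    (hinj.mono fun ω hω => by simpa [E] using card_strictRank_lt_le hω k) (Fin.last n)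
  calc P {ω | Y (Fin.last n) ω ∈ C ω} ≤ P (Z ⁻¹' E (Fin.last n)) := measure_mono hcover
    _ ≤ k / (n + 1) := ENNReal.le_div_iff_mul_le (by simp) (by simp) |>.2 (by
      simpa [mul_comm] using hcount)
    _ ≤ ENNReal.ofReal (1 - α + 1 / (n + 1)) := natCeil_div_le hα.2 n

/-- **Split conformal prediction, anti-conservative upper bound (Theorem 3.1).** -/
theorem split_conformal_marginal_coverage_upper
    {Ω : Type*} [MeasurableSpace Ω] (P : Measure Ω) [IsProbabilityMeasure P]
    {𝒳 : Type*} [MeasurableSpace 𝒳] (K : ℕ) (hK : 1 ≤ K) (n : ℕ)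
    (X : Fin (n + 1) → Ω → 𝒳) (Y : Fin (n + 1) → Ω → Fin K)
    (hmeas : ∀ i, Measurable (fun ω => (X i ω, Y i ω)))
    (hexch : ∀ π : Equiv.Perm (Fin (n + 1)),
      Measure.map (fun ω => fun i => (X (π i) ω, Y (π i) ω)) P
        = Measure.map (fun ω => fun i => (X i ω, Y i ω)) P)
    (S : 𝒳 × Fin K → ℝ) (hS : Measurable S)
    (hdistinct : P {ω | ∀ i j : Fin (n + 1), i ≠ j →
      S (X i ω, Y i ω) ≠ S (X j ω, Y j ω)} = 1)
    (α : ℝ) (hα : α ∈ Set.Ioo (0 : ℝ) 1)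
    (Qhat : Ω → EReal)
    (hQ : ∀ ω, Qhat ω =
      if ⌈(1 - α) * (n + 1)⌉ ≤ (n : ℤ) then
        ((kthSmallest (fun i : Fin n => S (X i.castSucc ω, Y i.castSucc ω))
            (⌈(1 - α) * (n + 1)⌉.toNat) : ℝ) : EReal)
      else ⊤)
    (C : Ω → Set (Fin K))
    (hC : ∀ ω, C ω = {y : Fin K | (S (X (Fin.last n) ω, y) : EReal) ≤ Qhat ω}) :
    P {ω | Y (Fin.last n) ω ∈ C ω} ≤ ENNReal.ofReal (1 - α + 1 / (n + 1)) :=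
  split_conformal_marginal_coverage_upper_general P K n X Y hmeas hexch S hS hdistinct α hα Qhat hQ
    C hC
end

section
/- Let (X_1,Y_1),…,(X_{n+1},Y_{n+1}) be exchangeable random pairs taking values in 𝒳 × {1,…,K}, let Ŝ : 𝒳 × {1,…,K} → ℝ be a fixed measurable nonconformity score function, and fix α ∈ (0,1). For each class y ∈ {1,…,K} let 𝒟^y = {i ∈ {1,…,n} : Y_i = y}, let Q̂^y_{1−α} be the ⌈(1−α)(1+|𝒟^y|)⌉-th smallest value among the scores {Ŝ(X_i,Y_i) : i ∈ 𝒟^y} (with Q̂^y_{1−α} = +∞ when ⌈(1−α)(1+|𝒟^y|)⌉ > |𝒟^y|), and let Ĉ_α(X_{n+1}) = {y : Ŝ(X_{n+1},y) ≤ Q̂^y_{1−α}}. Then for every y ∈ {1,…,K}, ℙ(Y_{n+1} ∈ Ĉ_α(X_{n+1}) and Y_{n+1} = y) ≥ (1 − α) · ℙ(Y_{n+1} = y); in particular, if ℙ(Y_{n+1} = y) > 0 then ℙ(Y_{n+1} ∈ Ĉ_α(X_{n+1}) ∣ Y_{n+1} = y) ≥ 1 − α. -/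
/-!
Call an index `i` a label-`y` outlier when `Y_i = y` and the score of point `i` strictly exceeds
at least `⌈(1 - α) m⌉` of the scores of the `m` points with label `y` among all `n + 1` points.
If the test point has label `y` and is not covered, its score exceeds the calibration quantile
`Q̂^y`, and (with `m = |𝒟^y| + 1`) this makes it an outlier. Among any `n + 1` points at most
`α m` are outliers: the lowest-scoring outlier has `⌈(1 - α) m⌉` label-`y` points strictly below
it, none of them outliers. By exchangeability every index is an outlier with the same
probability and has label `y` with the same probability, so averaging over the indices gives
`ℙ(test point is an outlier) ≤ α ℙ(Y_{n+1} = y)`.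
-/

open MeasureTheory ProbabilityTheory

/-- The `k`-th smallest value (1-indexed) of a list of reals. -/
noncomputable def kthSmallestL (l : List ℝ) (k : ℕ) : ℝ :=
  (l.mergeSort (fun a b => a ≤ b)).getD (k - 1) 0

open Finset
open scoped ENNReal

theorem le_countP_lt_of_kthSmallestL_lt {l : List ℝ} {k : ℕ} {t : ℝ} (hk : 1 ≤ k)
    (hkl : k ≤ l.length) (h : kthSmallestL l k < t) : k ≤ l.countP (· < t) := by
  set ls := l.mergeSort (fun a b => a ≤ b)
  have hsorted : ls.SortedLE := List.sortedLE_mergeSort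
  have hlen : ls.length = l.length := List.length_mergeSort l
  have hkth : kthSmallestL l k = ls[k - 1] :=
    List.getD_eq_getElem _ _ (by rw [List.length_mergeSort]; omega)
  have htake : ∀ a ∈ ls.take k, a < t := by
    intro a ha
    obtain ⟨i, hi, rfl⟩ := List.mem_take_iff_getElem.mp ha
    exact (List.sortedLE_iff_getElem_le_getElem_of_le.mp hsorted (by omega)).trans_lt (hkth ▸ h)
  calc k = (ls.take k).countP (· < t) := by
        rw [List.countP_eq_length.mpr (by simpa using htake), List.length_take]; omega
    _ ≤ ls.countP (· < t) := (List.take_sublist k ls).countP_le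
    _ = l.countP (· < t) := (List.mergeSort_perm l _).countP_eq _

theorem List.countP_finRange_eq_card_filter {n : ℕ} (p : Fin n → Prop) [DecidablePred p] :
    (List.finRange n).countP (fun i => decide (p i)) = #{i | p i} := by
  rw [Finset.card_def, Finset.filter_val, ← Multiset.countP_eq_card_filter, Finset.val_univ_fin,
    Multiset.coe_countP]

theorem Fin.card_filter_univ_castSucc {n : ℕ} (p : Fin (n + 1) → Prop) [DecidablePred p] :
    #{i | p i} = #{i : Fin n | p i.castSucc} + if p (Fin.last n) then 1 else 0 := by
  simp only [Finset.card_filter, Fin.sum_univ_castSucc]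

theorem card_filter_le_card_filter_lt_le_card_sub {ι β : Type*} [LinearOrder β]
    (s : Finset ι) (f : ι → β) (k : ℕ) :
    #{i ∈ s | k ≤ #{j ∈ s | f j < f i}} ≤ #s - k := by
  classical
  set T := {i ∈ s | k ≤ #{j ∈ s | f j < f i}}
  obtain hT | hT := T.eq_empty_or_nonempty
  · simp [hT]
  -- the `k` elements below a minimiser of `f` on `T` all lie outside `T`
  obtain ⟨i₀, hi₀, hmin⟩ := T.exists_min_image f hT
  set U := {j ∈ s | f j < f i₀}
  have hkU : k ≤ #U := (mem_filter.mp hi₀).2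
  have hdisj : Disjoint T U := disjoint_left.mpr fun j hjT hjU =>
    (hmin j hjT).not_gt (mem_filter.mp hjU).2
  have hTU : T ∪ U ⊆ s := union_subset (filter_subset _ _) (filter_subset _ _)
  have := card_union_of_disjoint hdisj ▸ card_le_card hTU
  omega

theorem measurable_card_filter {ι Ω : Type*} [Fintype ι] [MeasurableSpace Ω]
    (p : ι → Ω → Prop) [∀ i ω, Decidable (p i ω)] (hp : ∀ i, MeasurableSet {ω | p i ω}) :
    Measurable fun ω => #{i | p i ω} := by
  simp only [card_filter]
  exact Finset.measurable_sum _ fun i _ => Measurable.ite (hp i) measurable_const measurable_const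

section Exchangeable

variable {ι E : Type*} [Fintype ι] [MeasurableSpace E] {μ : Measure (ι → E)}

theorem lintegral_card_comp_perm_mem (hμ : ∀ π : Equiv.Perm ι, μ.map (fun v => v ∘ π) = μ)
    (σ : ι → Equiv.Perm ι) {A : Set (ι → E)} [DecidablePred (· ∈ A)] (hA : MeasurableSet A) :
    ∫⁻ v, (#{i | v ∘ σ i ∈ A} : ℝ≥0∞) ∂μ = Fintype.card ι * μ A := by
  have hσ (i : ι) : Measurable fun v : ι → E => v ∘ σ i := by fun_prop
  have hind : Measurable (A.indicator (1 : (ι → E) → ℝ≥0∞)) := measurable_one.indicator hA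
  have hsum (v : ι → E) : (#{i | v ∘ σ i ∈ A} : ℝ≥0∞) = ∑ i, A.indicator 1 (v ∘ σ i) := by
    simp only [card_filter, Nat.cast_sum, Nat.cast_ite, Nat.cast_one, Nat.cast_zero]
    exact sum_congr rfl fun i _ => by rw [Set.indicator_apply, Pi.one_apply]
  have hterm (i : ι) : ∫⁻ v, A.indicator 1 (v ∘ σ i) ∂μ = μ A := by
    rw [← lintegral_map hind (hσ i), hμ, lintegral_indicator_one hA]
  simp_rw [hsum]
  rw [lintegral_finsetSum (f := fun i v => A.indicator 1 (v ∘ σ i)) _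
    fun i _ => hind.comp (hσ i)]
  simp [hterm]

theorem measure_le_mul_of_card_comp_perm_mem_le [Nonempty ι]
    (hμ : ∀ π : Equiv.Perm ι, μ.map (fun v => v ∘ π) = μ) (σ : ι → Equiv.Perm ι)
    {A W : Set (ι → E)} [DecidablePred (· ∈ A)] [DecidablePred (· ∈ W)]
    (hA : MeasurableSet A) (hW : MeasurableSet W) {c : ℝ≥0∞}
    (h : ∀ v, (#{i | v ∘ σ i ∈ A} : ℝ≥0∞) ≤ c * #{i | v ∘ σ i ∈ W}) : μ A ≤ c * μ W := by
  have hcard : (Fintype.card ι : ℝ≥0∞) ≠ 0 := by simp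
  refine (ENNReal.mul_le_mul_iff_right hcard (ENNReal.natCast_ne_top _)).mp ?_
  have hσ (i : ι) : Measurable fun v : ι → E => v ∘ σ i := by fun_prop
  have hW' : Measurable fun v : ι → E => (#{i | v ∘ σ i ∈ W} : ℝ≥0∞) :=
    measurable_from_nat.comp (measurable_card_filter _ fun i => hσ i hW)
  calc (Fintype.card ι : ℝ≥0∞) * μ A = ∫⁻ v, (#{i | v ∘ σ i ∈ A} : ℝ≥0∞) ∂μ :=
        (lintegral_card_comp_perm_mem hμ σ hA).symm
    _ ≤ ∫⁻ v, c * #{i | v ∘ σ i ∈ W} ∂μ := lintegral_mono h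
    _ = Fintype.card ι * (c * μ W) := by
        rw [lintegral_const_mul _ hW', lintegral_card_comp_perm_mem hμ σ hW, mul_left_comm]

end Exchangeable

section ScoreOutlier

variable {ι 𝒳 L : Type*} [Fintype ι] [DecidableEq L]

def IsScoreOutlier (α : ℝ) (S : 𝒳 × L → ℝ) (y : L) (v : ι → 𝒳 × L) (i : ι) : Prop :=
  (v i).2 = y ∧ ⌈(1 - α) * #{j | (v j).2 = y}⌉.toNat ≤ #{j | (v j).2 = y ∧ S (v j) < S (v i)}

noncomputable instance (α : ℝ) (S : 𝒳 × L → ℝ) (y : L) (v : ι → 𝒳 × L) :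
    DecidablePred (IsScoreOutlier α S y v) :=
  fun _ => inferInstanceAs (Decidable (_ ∧ _))

theorem isScoreOutlier_comp_perm {α : ℝ} {S : 𝒳 × L → ℝ} {y : L} {v : ι → 𝒳 × L}
    (π : Equiv.Perm ι) (i : ι) :
    IsScoreOutlier α S y (v ∘ π) i ↔ IsScoreOutlier α S y v (π i) := by
  have hcard (p : ι → Prop) [DecidablePred p] : #{j | p (π j)} = #{j | p j} :=
    card_equiv π (by simp)
  simp only [IsScoreOutlier, Function.comp_apply]
  rw [hcard (fun j => (v j).2 = y), hcard (fun j => (v j).2 = y ∧ S (v j) < S (v (π i)))]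

theorem card_isScoreOutlier_le {α : ℝ} (hα : 0 ≤ α) (S : 𝒳 × L → ℝ) (y : L) (v : ι → 𝒳 × L) :
    (#{i | IsScoreOutlier α S y v i} : ℝ) ≤ α * #{i | (v i).2 = y} := by
  set s : Finset ι := {i | (v i).2 = y}
  set k := ⌈(1 - α) * #s⌉.toNat
  have hfilter : ({i | IsScoreOutlier α S y v i} : Finset ι)
      = {i ∈ s | k ≤ #{j ∈ s | S (v j) < S (v i)}} := by
    simp only [IsScoreOutlier, s, filter_filter]
    rfl
  have hk : (1 - α) * #s ≤ k := (Int.le_ceil _).trans (by exact_mod_cast Int.self_le_toNat _)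
  have hcount := hfilter ▸ card_filter_le_card_filter_lt_le_card_sub s (fun i => S (v i)) k
  obtain h0 | hpos := Nat.eq_zero_or_pos (#{i | IsScoreOutlier α S y v i})
  · rw [h0, Nat.cast_zero]; positivity
  · have : (#{i | IsScoreOutlier α S y v i} : ℝ) + k ≤ #s := by exact_mod_cast (by omega)
    linarith

variable [MeasurableSpace 𝒳] [MeasurableSpace L] [MeasurableSingletonClass L]

theorem measurableSet_isScoreOutlier (α : ℝ) {S : 𝒳 × L → ℝ} (hS : Measurable S) (y : L)
    (i : ι) : MeasurableSet {v : ι → 𝒳 × L | IsScoreOutlier α S y v i} := by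
  have hlabel (j : ι) : MeasurableSet {v : ι → 𝒳 × L | (v j).2 = y} :=
    (measurable_pi_apply j).snd (measurableSet_singleton y)
  have hscore (j : ι) : Measurable fun v : ι → 𝒳 × L => S (v j) := hS.comp (measurable_pi_apply j)
  simp only [IsScoreOutlier, Set.ofPred_and]
  refine (hlabel i).inter (measurableSet_le ?_ ?_)
  · exact (measurable_from_nat (f := fun m : ℕ => ⌈(1 - α) * m⌉.toNat)).comp
      (measurable_card_filter _ hlabel)
  · exact measurable_card_filter _ fun j => (hlabel j).inter (measurableSet_lt (hscore j) (hscore i))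

theorem measure_isScoreOutlier_le [DecidableEq ι] {Ω : Type*} [MeasurableSpace Ω]
    {P : Measure Ω} {V : Ω → ι → 𝒳 × L} (hV : Measurable V)
    (hexch : ∀ π : Equiv.Perm ι, P.map (fun ω => V ω ∘ π) = P.map V) {α : ℝ} (hα : 0 ≤ α)
    {S : 𝒳 × L → ℝ} (hS : Measurable S) (y : L) (i : ι) :
    P {ω | IsScoreOutlier α S y (V ω) i} ≤ ENNReal.ofReal α * P {ω | (V ω i).2 = y} := by
  have : Nonempty ι := ⟨i⟩
  have hinv (π : Equiv.Perm ι) : (P.map V).map (fun v => v ∘ π) = P.map V := by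
    rw [Measure.map_map (by fun_prop) hV]
    exact hexch π
  have hA := measurableSet_isScoreOutlier α hS y i
  have hW : MeasurableSet {v : ι → 𝒳 × L | (v i).2 = y} :=
    (measurable_pi_apply i).snd (measurableSet_singleton y)
  have key := measure_le_mul_of_card_comp_perm_mem_le hinv (fun j => Equiv.swap j i) hA hW
    (c := ENNReal.ofReal α) fun v => by
      simp only [Set.mem_ofPred_eq, isScoreOutlier_comp_perm, Function.comp_apply,
        Equiv.swap_apply_right]
      rw [← ENNReal.ofReal_natCast, ← ENNReal.ofReal_natCast, ← ENNReal.ofReal_mul hα]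
      exact ENNReal.ofReal_le_ofReal (card_isScoreOutlier_le hα S y v)
  rwa [Measure.map_apply hV hA, Measure.map_apply hV hW] at key

end ScoreOutlier

section LabelQuantile

variable {𝒳 L : Type*} [DecidableEq L] {n : ℕ}

/-- The quantile `Q̂^y_{1-α}`, computed from the calibration points `v ∘ Fin.castSucc`. -/
noncomputable def labelQuantile (α : ℝ) (S : 𝒳 × L → ℝ) (y : L) (v : Fin (n + 1) → 𝒳 × L) :
    EReal :=
  let D := (List.finRange n).filter fun i => (v i.castSucc).2 = y
  if ⌈(1 - α) * (1 + D.length)⌉ ≤ (D.length : ℤ) then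
    ((kthSmallestL (D.map fun i => S (v i.castSucc)) ⌈(1 - α) * (1 + D.length)⌉.toNat : ℝ) : EReal)
  else ⊤

theorem isScoreOutlier_last_of_labelQuantile_lt {α : ℝ} (hα : α < 1) {S : 𝒳 × L → ℝ} {y : L}
    {v : Fin (n + 1) → 𝒳 × L} (hy : (v (Fin.last n)).2 = y)
    (h : labelQuantile α S y v < S (v (Fin.last n))) :
    IsScoreOutlier α S y v (Fin.last n) := by
  set m := #{i : Fin n | (v i.castSucc).2 = y}
  have hm : ((List.finRange n).filter fun i => (v i.castSucc).2 = y).length = m := by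
    rw [← List.countP_eq_length_filter, List.countP_finRange_eq_card_filter]
  simp only [labelQuantile, hm] at h
  split_ifs at h with hk
  · have hk1 : 1 ≤ ⌈(1 - α) * (1 + (m : ℝ))⌉.toNat := by
      have : 0 < ⌈(1 - α) * (1 + (m : ℝ))⌉ :=
        Int.ceil_pos.mpr (mul_pos (by linarith) (by positivity))
      omega
    have hcount := le_countP_lt_of_kthSmallestL_lt hk1
      (by simpa [hm] using Int.toNat_le.mpr hk) (EReal.coe_lt_coe_iff.mp h)
    simp only [List.countP_map, List.countP_filter, Function.comp_apply, ← Bool.decide_and,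
      List.countP_finRange_eq_card_filter, and_comm] at hcount
    refine ⟨hy, ?_⟩
    rw [Fin.card_filter_univ_castSucc, Fin.card_filter_univ_castSucc, if_pos hy,
      if_neg fun h => (h.2).false, add_zero]
    convert hcount using 3
    push_cast
    ring
  · exact absurd h not_top_lt

end LabelQuantile

theorem ENNReal.ofReal_one_sub_mul_le_of_le_add {a b : ℝ≥0∞} {α : ℝ} (hα : 0 ≤ α) (ha : a ≠ ⊤)
    (h : a ≤ ENNReal.ofReal α * a + b) : ENNReal.ofReal (1 - α) * a ≤ b := by
  rw [ENNReal.ofReal_sub 1 hα, ENNReal.ofReal_one, ENNReal.sub_mul fun _ _ => ha, one_mul,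
    tsub_le_iff_right, add_comm]
  exact h

theorem split_conformal_label_conditional_coverage_lower_general
    {Ω : Type*} [MeasurableSpace Ω] (P : Measure Ω) [IsProbabilityMeasure P]
    {𝒳 : Type*} [MeasurableSpace 𝒳] (K : ℕ) (n : ℕ)
    (X : Fin (n + 1) → Ω → 𝒳) (Y : Fin (n + 1) → Ω → Fin K)
    (hmeas : ∀ i, Measurable (fun ω => (X i ω, Y i ω)))
    (hexch : ∀ π : Equiv.Perm (Fin (n + 1)),
      Measure.map (fun ω => fun i => (X (π i) ω, Y (π i) ω)) P
        = Measure.map (fun ω => fun i => (X i ω, Y i ω)) P)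
    (S : 𝒳 × Fin K → ℝ) (hS : Measurable S)
    (α : ℝ) (hα : α ∈ Set.Ioo (0 : ℝ) 1)
    -- `D y ω` is the list of calibration indices `i ∈ {1,…,n}` whose label is `y`
    (D : Fin K → Ω → List (Fin n))
    (hD : ∀ y ω, D y ω = (List.finRange n).filter (fun i => Y i.castSucc ω = y))
    -- label-wise calibrated quantiles
    (Qhat : Fin K → Ω → EReal)
    (hQ : ∀ y ω, Qhat y ω =
      if ⌈(1 - α) * (1 + (D y ω).length)⌉ ≤ ((D y ω).length : ℤ) then
        ((kthSmallestL ((D y ω).map (fun i => S (X i.castSucc ω, Y i.castSucc ω)))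
            (⌈(1 - α) * (1 + (D y ω).length)⌉.toNat) : ℝ) : EReal)
      else ⊤)
    (C : Ω → Set (Fin K))
    (hC : ∀ ω, C ω = {y : Fin K | (S (X (Fin.last n) ω, y) : EReal) ≤ Qhat y ω}) :
    ∀ y : Fin K,
      ENNReal.ofReal (1 - α) * P {ω | Y (Fin.last n) ω = y}
          ≤ P {ω | Y (Fin.last n) ω ∈ C ω ∧ Y (Fin.last n) ω = y}
      ∧ (P {ω | Y (Fin.last n) ω = y} ≠ 0 →
          ENNReal.ofReal (1 - α)
            ≤ P[{ω | Y (Fin.last n) ω ∈ C ω} | {ω | Y (Fin.last n) ω = y}]) := by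
  intro y
  set V : Ω → Fin (n + 1) → 𝒳 × Fin K := fun ω i => (X i ω, Y i ω)
  have hV : Measurable V := measurable_pi_lambda _ hmeas
  have hlabel : MeasurableSet {ω | Y (Fin.last n) ω = y} :=
    (hmeas _).snd (measurableSet_singleton y)
  have hout := measure_isScoreOutlier_le hV hexch hα.1.le hS y (Fin.last n)
  have hmiss : {ω | Y (Fin.last n) ω = y} ⊆ {ω | IsScoreOutlier α S y (V ω) (Fin.last n)}
      ∪ {ω | Y (Fin.last n) ω ∈ C ω ∧ Y (Fin.last n) ω = y} := by
    intro ω (hy : Y (Fin.last n) ω = y)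
    by_cases hc : Y (Fin.last n) ω ∈ C ω
    · exact Or.inr ⟨hc, hy⟩
    have hQV : Qhat y ω = labelQuantile α S y (V ω) := by rw [hQ, hD]; rfl
    rw [hC, Set.mem_ofPred_eq, hy, not_le, hQV] at hc
    exact Or.inl (isScoreOutlier_last_of_labelQuantile_lt hα.2 hy (by simpa [V, hy] using hc))
  have hcov := ENNReal.ofReal_one_sub_mul_le_of_le_add hα.1.le (measure_ne_top P _)
    ((measure_mono hmiss).trans ((measure_union_le _ _).trans (add_le_add_left hout _)))
  refine ⟨hcov, fun hne => ?_⟩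
  rw [cond_apply hlabel, ← ENNReal.div_eq_inv_mul,
    ENNReal.le_div_iff_mul_le (Or.inl hne) (Or.inl (measure_ne_top P _))]
  convert hcov using 2
  ext ω
  exact and_comm

/-- **Label-conditional split conformal prediction, coverage lower bound (Theorem 3.2).** -/
theorem split_conformal_label_conditional_coverage_lower
    {Ω : Type*} [MeasurableSpace Ω] (P : Measure Ω) [IsProbabilityMeasure P]
    {𝒳 : Type*} [MeasurableSpace 𝒳] (K : ℕ) (hK : 1 ≤ K) (n : ℕ)
    (X : Fin (n + 1) → Ω → 𝒳) (Y : Fin (n + 1) → Ω → Fin K)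
    (hmeas : ∀ i, Measurable (fun ω => (X i ω, Y i ω)))
    (hexch : ∀ π : Equiv.Perm (Fin (n + 1)),
      Measure.map (fun ω => fun i => (X (π i) ω, Y (π i) ω)) P
        = Measure.map (fun ω => fun i => (X i ω, Y i ω)) P)
    (S : 𝒳 × Fin K → ℝ) (hS : Measurable S)
    (α : ℝ) (hα : α ∈ Set.Ioo (0 : ℝ) 1)
    -- `D y ω` is the list of calibration indices `i ∈ {1,…,n}` whose label is `y`
    (D : Fin K → Ω → List (Fin n))
    (hD : ∀ y ω, D y ω = (List.finRange n).filter (fun i => Y i.castSucc ω = y))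
    -- label-wise calibrated quantiles
    (Qhat : Fin K → Ω → EReal)
    (hQ : ∀ y ω, Qhat y ω =
      if ⌈(1 - α) * (1 + (D y ω).length)⌉ ≤ ((D y ω).length : ℤ) then
        ((kthSmallestL ((D y ω).map (fun i => S (X i.castSucc ω, Y i.castSucc ω)))
            (⌈(1 - α) * (1 + (D y ω).length)⌉.toNat) : ℝ) : EReal)
      else ⊤)
    (C : Ω → Set (Fin K))
    (hC : ∀ ω, C ω = {y : Fin K | (S (X (Fin.last n) ω, y) : EReal) ≤ Qhat y ω}) :
    ∀ y : Fin K,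
      ENNReal.ofReal (1 - α) * P {ω | Y (Fin.last n) ω = y}
          ≤ P {ω | Y (Fin.last n) ω ∈ C ω ∧ Y (Fin.last n) ω = y}
      ∧ (P {ω | Y (Fin.last n) ω = y} ≠ 0 →
          ENNReal.ofReal (1 - α)
            ≤ P[{ω | Y (Fin.last n) ω ∈ C ω} | {ω | Y (Fin.last n) ω = y}]) :=
  split_conformal_label_conditional_coverage_lower_general P K n X Y hmeas hexch S hS α hα D hD Qhat
    hQ C hC
end
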